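/- Let 0 < s < 1/2, μ = 1 - s, 0 < d < 1, η = d/2. Then the ellipsoid B^μ_η = {(z₁, z') ∈ ℂⁿ : |z₁ - (1-η)|² + (η/μ)|z'|² < η²} is contained in the ball B_s = {z ∈ ℂⁿ : |z - (s, 0, …, 0)| < 1 - s}. -/

import Mathlib

/-!
The ellipsoid has center `1 - η` on the real axis, which lies at distance `μ - η` from the
center `s = 1 - μ` of the ball, so the triangle inequality reduces the claim to a quadratic
inequality in `a = |z₁ - (1 - η)|` and `b = |z'|`. After clearing denominators, the gap between
the two sides is `(μ - η)(a - η)² ≥ 0`.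
-/

theorem sq_add_sub_add_sq_lt_sq {a b η μ : ℝ} (hη : 0 < η) (hημ : η ≤ μ)
    (h : a ^ 2 + η / μ * b ^ 2 < η ^ 2) : (a + (μ - η)) ^ 2 + b ^ 2 < μ ^ 2 := by
  have hμ : 0 < μ := hη.trans_le hημ
  have hcleared : μ * a ^ 2 + η * b ^ 2 < μ * η ^ 2 := by
    have := mul_lt_mul_of_pos_left h hμ
    rwa [mul_add, ← mul_assoc, mul_div_cancel₀ η hμ.ne'] at this
  have hgap : η * μ ^ 2 - (η * (a + (μ - η)) ^ 2 + (μ * η ^ 2 - μ * a ^ 2))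
      = (μ - η) * (a - η) ^ 2 := by ring
  have hgap_nonneg : 0 ≤ (μ - η) * (a - η) ^ 2 :=
    mul_nonneg (sub_nonneg.2 hημ) (sq_nonneg _)
  refine lt_of_mul_lt_mul_left ?_ hη.le
  linarith

theorem dist_sq_add_norm_sq_lt_of_ellipsoid {E F : Type*} [PseudoMetricSpace E]
    [SeminormedAddCommGroup F] {x p q : E} {y : F} {η μ : ℝ} (hη : 0 < η)
    (hqp : dist q p ≤ μ - η) (h : dist x q ^ 2 + η / μ * ‖y‖ ^ 2 < η ^ 2) :
    dist x p ^ 2 + ‖y‖ ^ 2 < μ ^ 2 := by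
  have hημ : η ≤ μ := by linarith [dist_nonneg (x := q) (y := p)]
  have hxp : dist x p ≤ dist x q + (μ - η) := (dist_triangle x q p).trans (by gcongr)
  calc dist x p ^ 2 + ‖y‖ ^ 2 ≤ (dist x q + (μ - η)) ^ 2 + ‖y‖ ^ 2 := by
        gcongr
    _ < μ ^ 2 := sq_add_sub_add_sq_lt_sq hη hημ h

theorem ellipsoid_subset_ball_general {n : ℕ} (s d : ℝ) (hs : s < 1/2)
    (hd0 : 0 < d) (hd1 : d < 1)
    (μ η : ℝ) (hμ : μ = 1 - s) (hη : η = d / 2)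
    (z₁ : ℂ) (z' : EuclideanSpace ℂ (Fin (n - 1)))
    (hz : ‖z₁ - (1 - η : ℝ)‖ ^ 2 + (η / μ) * ‖z'‖ ^ 2 < η ^ 2) :
    ‖z₁ - (s : ℝ)‖ ^ 2 + ‖z'‖ ^ 2 < (1 - s) ^ 2 := by
  have hη0 : 0 < η := by linarith
  have hcenters : dist ((1 - η : ℝ) : ℂ) (s : ℝ) ≤ μ - η := by
    rw [Complex.isometry_ofReal.dist_eq, Real.dist_eq, abs_of_nonneg] <;> linarith
  rw [← dist_eq_norm] at hz ⊢
  rw [← hμ]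
  exact dist_sq_add_norm_sq_lt_of_ellipsoid hη0 hcenters hz

/-- For 0 < s < 1/2, μ = 1-s, 0 < d < 1, η = d/2, the ellipsoid
B^μ_η = {(z₁,z') : |z₁-(1-η)|² + (η/μ)|z'|² < η²} is contained in the ball
B_s of radius 1-s centered at (s,0,…,0); membership in B_s is expressed as
|z₁ - s|² + |z'|² < (1-s)². -/
theorem ellipsoid_subset_ball {n : ℕ} (s d : ℝ) (hs0 : 0 < s) (hs : s < 1/2)
    (hd0 : 0 < d) (hd1 : d < 1)
    (μ η : ℝ) (hμ : μ = 1 - s) (hη : η = d / 2)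
    (z₁ : ℂ) (z' : EuclideanSpace ℂ (Fin (n - 1)))
    (hz : ‖z₁ - (1 - η : ℝ)‖ ^ 2 + (η / μ) * ‖z'‖ ^ 2 < η ^ 2) :
    ‖z₁ - (s : ℝ)‖ ^ 2 + ‖z'‖ ^ 2 < (1 - s) ^ 2 :=
  ellipsoid_subset_ball_general s d hs hd0 hd1 μ η hμ hη z₁ z' hz
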